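/- arXiv:2307.07676 — 2 statements merged into one kernel-verified Lean document; each statement's English description precedes it below -/
import Mathlib

section
/- Let G1=(V1,E1,ℓ1) and G2=(V2,E2,ℓ2) be finite acyclic labeled graphs with single-character vertex labels, and let v1∈V1, v2∈V2 with ℓ1(v1)≠ℓ2(v2). Then L(v1,v2) = max({L(u1,v2) : (u1,v1)∈E1} ∪ {L(v1,u2) : (u2,v2)∈E2} ∪ {0}). -/
open List Relation

section Defs

variable {V V1 V2 V3 α : Type*}

/-- A (directed) path: a nonempty list of vertices, consecutive ones joined by edges. -/
def IsPath (E : V → V → Prop) (p : List V) : Prop :=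
  p ≠ [] ∧ p.Chain' E

/-- Paths ending at `v` (the set `P(v)`). -/
def EndsAt (E : V → V → Prop) (v : V) (p : List V) : Prop :=
  IsPath E p ∧ p.getLast? = some v

/-- A path is left-maximal if its first vertex has no in-coming edges. -/
def LeftMax (E : V → V → Prop) (p : List V) : Prop :=
  ∀ w u, p.head? = some w → ¬ E u w

/-- A path is right-maximal if its last vertex has no out-going edges. -/
def RightMax (E : V → V → Prop) (p : List V) : Prop :=
  ∀ w u, p.getLast? = some w → ¬ E w u

/-- `Subseq(ℓ(P(v)))`: subsequences of label strings of paths ending at `v`. -/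
def SubseqAt (E : V → V → Prop) (ℓ : V → α) (v : V) : Set (List α) :=
  {z | ∃ p, EndsAt E v p ∧ z.Sublist (p.map ℓ)}

/-- `Subseq(ℓ(LMP(v)))`: subsequences of label strings of left-maximal paths ending at `v`. -/
def SubseqLM (E : V → V → Prop) (ℓ : V → α) (v : V) : Set (List α) :=
  {z | ∃ p, EndsAt E v p ∧ LeftMax E p ∧ z.Sublist (p.map ℓ)}

/-- `Subseq(G)`: subsequences of label strings of all paths of `G`. -/
def SubseqG (E : V → V → Prop) (ℓ : V → α) : Set (List α) :=
  {z | ∃ p, IsPath E p ∧ z.Sublist (p.map ℓ)}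

/-- A graph is acyclic if no vertex lies on a nonempty cycle. -/
def Acyclic (E : V → V → Prop) : Prop :=
  ∀ v, ¬ Relation.TransGen E v v

/-- The set `S_IC(v1,v2,v3)`. -/
def SIC (E1 : V1 → V1 → Prop) (ℓ1 : V1 → α) (E2 : V2 → V2 → Prop) (ℓ2 : V2 → α)
    (E3 : V3 → V3 → Prop) (ℓ3 : V3 → α) (v1 : V1) (v2 : V2) (v3 : V3) :
    Set (List α) :=
  {z | (∃ q, EndsAt E3 v3 q ∧ LeftMax E3 q ∧ (q.map ℓ3).Sublist z) ∧
       z ∈ SubseqAt E1 ℓ1 v1 ∧ z ∈ SubseqAt E2 ℓ2 v2}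

/-- Maximum length of a string in `S`, with `⊥` (= −∞) for `S = ∅`. -/
noncomputable def maxLen (S : Set (List α)) : WithBot ℕ :=
  sSup ((fun z : List α => (z.length : WithBot ℕ)) '' S)

/-- `L(v1,v2)`: the maximum length of a common subsequence (as a natural number). -/
noncomputable def Lval (E1 : V1 → V1 → Prop) (ℓ1 : V1 → α)
    (E2 : V2 → V2 → Prop) (ℓ2 : V2 → α) (v1 : V1) (v2 : V2) : ℕ :=
  sSup {n | ∃ z ∈ SubseqAt E1 ℓ1 v1 ∩ SubseqAt E2 ℓ2 v2, n = z.length}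

/-- `D(v1,v2,v3)`: the maximum length of a string in `S_IC(v1,v2,v3)`, `−∞` if empty. -/
noncomputable def Dval (E1 : V1 → V1 → Prop) (ℓ1 : V1 → α) (E2 : V2 → V2 → Prop) (ℓ2 : V2 → α)
    (E3 : V3 → V3 → Prop) (ℓ3 : V3 → α) (v1 : V1) (v2 : V2) (v3 : V3) : WithBot ℕ :=
  maxLen (SIC E1 ℓ1 E2 ℓ2 E3 ℓ3 v1 v2 v3)

end Defs

/-
Every common subsequence `z` of paths ending at `v1` and `v2` either is empty, or avoids the
last vertex of one of the two paths (and is then a common subsequence for a predecessor), or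
ends in both labels `ℓ1 v1` and `ℓ2 v2`, which is impossible when they differ. Conversely a
path ending at a predecessor extends to one ending at `v1` (or `v2`), so `L` is monotone along
edges. Acyclicity of `G1` bounds all lengths by `|V1|`, so the suprema in `ℕ` are attained.
-/

section Paths

variable {V α : Type*} {E : V → V → Prop} {ℓ : V → α}

theorem Acyclic.nodup_of_isChain (hac : Acyclic E) {p : List V} (hp : p.IsChain E) : p.Nodup := by
  rw [List.nodup_iff_sublist]
  intro a ha
  have htc : p.IsChain (TransGen E) := hp.imp fun _ _ => TransGen.single
  exact hac a (List.isChain_pair.mp (htc.sublist ha))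

theorem nil_mem_subseqAt (v : V) : ([] : List α) ∈ SubseqAt E ℓ v :=
  ⟨[v], ⟨⟨by simp, List.isChain_singleton v⟩, by simp⟩, List.nil_sublist _⟩

theorem subseqAt_subset_of_edge {u v : V} (huv : E u v) : SubseqAt E ℓ u ⊆ SubseqAt E ℓ v := by
  rintro z ⟨p, ⟨⟨-, hp⟩, hlast⟩, hz⟩
  refine ⟨p ++ [v], ⟨⟨by simp, ?_⟩, by simp⟩, ?_⟩
  · change (p ++ [v]).IsChain E
    rw [List.isChain_append]
    refine ⟨hp, List.isChain_singleton v, ?_⟩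
    rintro x hx y hy
    rw [hlast, Option.mem_some_iff] at hx
    simp only [List.head?_cons, Option.mem_some_iff] at hy
    exact hx ▸ hy ▸ huv
  · rw [List.map_append]
    exact hz.trans (List.sublist_append_left _ _)

theorem length_le_card_of_mem_subseqAt [Fintype V] (hac : Acyclic E) {v : V} {z : List α}
    (hz : z ∈ SubseqAt E ℓ v) : z.length ≤ Fintype.card V := by
  obtain ⟨p, ⟨⟨-, hp⟩, -⟩, hzp⟩ := hz
  calc z.length ≤ (p.map ℓ).length := hzp.length_le
    _ = p.length := List.length_map _
    _ ≤ Fintype.card V := (hac.nodup_of_isChain hp).length_le_card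

theorem mem_subseqAt_cases {v : V} {z : List α} (hz : z ∈ SubseqAt E ℓ v) :
    z = [] ∨ (∃ u, E u v ∧ z ∈ SubseqAt E ℓ u) ∨ z.getLast? = some (ℓ v) := by
  obtain ⟨p, ⟨⟨hne, hp⟩, hlast⟩, hzp⟩ := hz
  have hsplit : p = p.dropLast ++ [v] := by
    conv_lhs => rw [← List.dropLast_append_getLast hne]
    rw [List.getLast?_eq_some_getLast hne, Option.some_inj] at hlast
    rw [hlast]
  rw [hsplit, List.map_append] at hzp
  replace hp : (p.dropLast ++ [v]).IsChain E := hsplit ▸ hp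
  rw [List.isChain_append] at hp
  obtain ⟨z₁, z₂, rfl, hz₁, hz₂⟩ := List.sublist_append_iff.mp hzp
  rcases List.sublist_singleton.mp hz₂ with rfl | rfl
  · rw [List.append_nil]
    by_cases hinit : p.dropLast = []
    · left
      simpa [hinit] using hz₁
    · right; left
      have hinit_last : p.dropLast.getLast? = some (p.dropLast.getLast hinit) :=
        List.getLast?_eq_some_getLast hinit
      exact ⟨_, hp.2.2 _ hinit_last v rfl, p.dropLast, ⟨⟨hinit, hp.1⟩, hinit_last⟩, hz₁⟩
  · right; right
    simp

end Paths

section CommonSubsequences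

variable {V1 V2 α : Type*} {E1 : V1 → V1 → Prop} {ℓ1 : V1 → α} {E2 : V2 → V2 → Prop}
  {ℓ2 : V2 → α}

theorem Lval_le {v1 : V1} {v2 : V2} {n : ℕ}
    (h : ∀ z ∈ SubseqAt E1 ℓ1 v1, z ∈ SubseqAt E2 ℓ2 v2 → z.length ≤ n) :
    Lval E1 ℓ1 E2 ℓ2 v1 v2 ≤ n :=
  csSup_le ⟨0, [], ⟨nil_mem_subseqAt v1, nil_mem_subseqAt v2⟩, rfl⟩ <| by
    rintro _ ⟨z, ⟨hz1, hz2⟩, rfl⟩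
    exact h z hz1 hz2

theorem le_Lval [Fintype V1] (hac : Acyclic E1) {v1 : V1} {v2 : V2} {z : List α}
    (hz1 : z ∈ SubseqAt E1 ℓ1 v1) (hz2 : z ∈ SubseqAt E2 ℓ2 v2) :
    z.length ≤ Lval E1 ℓ1 E2 ℓ2 v1 v2 :=
  le_csSup ⟨Fintype.card V1, by
      rintro _ ⟨z, ⟨hz1, -⟩, rfl⟩
      exact length_le_card_of_mem_subseqAt hac hz1⟩
    ⟨z, ⟨hz1, hz2⟩, rfl⟩

theorem Lval_le_card [Fintype V1] (hac : Acyclic E1) (v1 : V1) (v2 : V2) :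
    Lval E1 ℓ1 E2 ℓ2 v1 v2 ≤ Fintype.card V1 :=
  Lval_le fun _ hz1 _ => length_le_card_of_mem_subseqAt hac hz1

theorem Lval_le_of_edge_left [Fintype V1] (hac : Acyclic E1) {u1 v1 : V1} (v2 : V2)
    (hu : E1 u1 v1) : Lval E1 ℓ1 E2 ℓ2 u1 v2 ≤ Lval E1 ℓ1 E2 ℓ2 v1 v2 :=
  Lval_le fun _ hz1 hz2 => le_Lval hac (subseqAt_subset_of_edge hu hz1) hz2

theorem Lval_le_of_edge_right [Fintype V1] (hac : Acyclic E1) (v1 : V1) {u2 v2 : V2}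
    (hu : E2 u2 v2) : Lval E1 ℓ1 E2 ℓ2 v1 u2 ≤ Lval E1 ℓ1 E2 ℓ2 v1 v2 :=
  Lval_le fun _ hz1 hz2 => le_Lval hac hz1 (subseqAt_subset_of_edge hu hz2)

end CommonSubsequences

theorem stmt2_general {V1 V2 α : Type*} [Fintype V1]
    (E1 : V1 → V1 → Prop) (ℓ1 : V1 → α) (E2 : V2 → V2 → Prop) (ℓ2 : V2 → α)
    (h1 : Acyclic E1) (v1 : V1) (v2 : V2)
    (hlab : ℓ1 v1 ≠ ℓ2 v2) :
    Lval E1 ℓ1 E2 ℓ2 v1 v2 =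
      sSup (insert 0
        ({n | ∃ u1, E1 u1 v1 ∧ n = Lval E1 ℓ1 E2 ℓ2 u1 v2} ∪
         {n | ∃ u2, E2 u2 v2 ∧ n = Lval E1 ℓ1 E2 ℓ2 v1 u2})) := by
  set T : Set ℕ := insert 0
    ({n | ∃ u1, E1 u1 v1 ∧ n = Lval E1 ℓ1 E2 ℓ2 u1 v2} ∪
     {n | ∃ u2, E2 u2 v2 ∧ n = Lval E1 ℓ1 E2 ℓ2 v1 u2})
  have hT : BddAbove T := ⟨Fintype.card V1, by
    rintro _ (rfl | ⟨u1, -, rfl⟩ | ⟨u2, -, rfl⟩)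
    exacts [Nat.zero_le _, Lval_le_card h1 u1 v2, Lval_le_card h1 v1 u2]⟩
  refine le_antisymm (Lval_le fun z hz1 hz2 => ?_) (csSup_le ⟨0, Set.mem_insert 0 _⟩ ?_)
  · rcases mem_subseqAt_cases hz1 with rfl | ⟨u1, hu1, hz1⟩ | hlast1
    · exact Nat.zero_le _
    · exact (le_Lval h1 hz1 hz2).trans (le_csSup hT (.inr (.inl ⟨u1, hu1, rfl⟩)))
    rcases mem_subseqAt_cases hz2 with rfl | ⟨u2, hu2, hz2⟩ | hlast2
    · exact Nat.zero_le _
    · exact (le_Lval h1 hz1 hz2).trans (le_csSup hT (.inr (.inr ⟨u2, hu2, rfl⟩)))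
    · exact absurd (Option.some_injective _ (hlast1.symm.trans hlast2)) hlab
  · rintro _ (rfl | ⟨u1, hu1, rfl⟩ | ⟨u2, hu2, rfl⟩)
    exacts [Nat.zero_le _, Lval_le_of_edge_left h1 v2 hu1, Lval_le_of_edge_right h1 v1 hu2]

/-- For finite acyclic single-character labeled graphs `G1`, `G2`
and vertices `v1, v2` with distinct labels,
`L(v1,v2) = max({L(u1,v2) : (u1,v1) ∈ E1} ∪ {L(v1,u2) : (u2,v2) ∈ E2} ∪ {0})`. -/
theorem stmt2 {V1 V2 α : Type*} [Fintype V1] [Fintype V2]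
    (E1 : V1 → V1 → Prop) (ℓ1 : V1 → α) (E2 : V2 → V2 → Prop) (ℓ2 : V2 → α)
    (h1 : Acyclic E1) (h2 : Acyclic E2) (v1 : V1) (v2 : V2)
    (hlab : ℓ1 v1 ≠ ℓ2 v2) :
    Lval E1 ℓ1 E2 ℓ2 v1 v2 =
      sSup (insert 0
        ({n | ∃ u1, E1 u1 v1 ∧ n = Lval E1 ℓ1 E2 ℓ2 u1 v2} ∪
         {n | ∃ u2, E2 u2 v2 ∧ n = Lval E1 ℓ1 E2 ℓ2 v1 u2})) :=
  stmt2_general E1 ℓ1 E2 ℓ2 h1 v1 v2 hlab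
end

section
/- Let A, B, P be strings and let 1≤i≤|A|, 1≤j≤|B|, 0≤k≤|P| with A[i]≠B[j]. Then C(i,j,k) = max(C(i−1,j,k), C(i,j−1,k)). -/
open List Relation

/-- `C(i,j,k)`: the maximum length (`⊥` = −∞ if none exists) of a string `z` such
that `P[1..k]` is a subsequence of `z` and `z` is a common subsequence of
`A[1..i]` and `B[1..j]`. -/
noncomputable def Cval {α : Type*} (A B P : List α) (i j k : ℕ) : WithBot ℕ :=
  maxLen {z | (P.take k).Sublist z ∧ z.Sublist (A.take i) ∧ z.Sublist (B.take j)}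

/-!
Since `A[i] ≠ B[j]`, a common subsequence `z` of `A[1..i]` and `B[1..j]` cannot end by using
both last letters: if its last letter is not matched to `A[i]`, then `z` is a subsequence of
`A[1..i-1]`, and otherwise it is not matched to `B[j]` and `z` is a subsequence of `B[1..j-1]`.
So the strings counted by `C(i,j,k)` are exactly those counted by `C(i-1,j,k)` or `C(i,j-1,k)`,
and the maximum length over a union of two sets (bounded by `|A|`) is the larger of the maxima.
-/

theorem List.sublist_or_sublist_of_sublist_concat_of_ne {α : Type*} {a b : α} (hab : a ≠ b)
    {z l m : List α} (hl : z <+ l ++ [a]) (hm : z <+ m ++ [b]) : z <+ l ∨ z <+ m := by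
  obtain ⟨z₁, z₂, rfl, hz₁, hz₂⟩ := sublist_append_iff.1 hl
  obtain ⟨w₁, w₂, heq, hw₁, hw₂⟩ := sublist_append_iff.1 hm
  rcases sublist_singleton.1 hz₂ with rfl | rfl
  · exact .inl (by simpa using hz₁)
  rcases sublist_singleton.1 hw₂ with rfl | rfl
  · exact .inr (by simpa [heq] using hw₁)
  · exact absurd (by simpa using (append_inj' heq rfl).2) hab

theorem maxLen_union {α : Type*} {S T : Set (List α)} {n : ℕ}
    (hS : ∀ z ∈ S, z.length ≤ n) (hT : ∀ z ∈ T, z.length ≤ n) :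
    maxLen (S ∪ T) = max (maxLen S) (maxLen T) := by
  have bdd : ∀ U : Set (List α), (∀ z ∈ U, z.length ≤ n) →
      BddAbove ((fun z : List α => (z.length : WithBot ℕ)) '' U) := by
    refine fun U hU => ⟨n, ?_⟩
    rintro _ ⟨z, hz, rfl⟩
    exact WithBot.coe_le_coe.2 (hU z hz)
  unfold maxLen
  rw [Set.image_union, csSup_union' (bdd S hS) (bdd T hT)]

section Constrained

variable {α : Type*} (A B P : List α)

def constrainedCommonSubseqs (i j k : ℕ) : Set (List α) :=
  {z | (P.take k).Sublist z ∧ z.Sublist (A.take i) ∧ z.Sublist (B.take j)}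

theorem Cval_eq_maxLen (i j k : ℕ) :
    Cval A B P i j k = maxLen (constrainedCommonSubseqs A B P i j k) := rfl

theorem length_le_of_mem_constrainedCommonSubseqs {i j k : ℕ} {z : List α}
    (hz : z ∈ constrainedCommonSubseqs A B P i j k) : z.length ≤ A.length :=
  (hz.2.1.trans (take_sublist _ _)).length_le

theorem constrainedCommonSubseqs_succ_succ {i j k : ℕ} (hi : i < A.length) (hj : j < B.length)
    (hAB : A[i] ≠ B[j]) :
    constrainedCommonSubseqs A B P (i + 1) (j + 1) k =
      constrainedCommonSubseqs A B P i (j + 1) k ∪ constrainedCommonSubseqs A B P (i + 1) j k := by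
  have hA := take_succ_eq_append_getElem hi
  have hB := take_succ_eq_append_getElem hj
  ext z
  simp only [constrainedCommonSubseqs, Set.mem_union]
  constructor
  · rintro ⟨hP, hzA, hzB⟩
    rcases sublist_or_sublist_of_sublist_concat_of_ne hAB (hA ▸ hzA) (hB ▸ hzB) with h | h
    · exact .inl ⟨hP, h, hzB⟩
    · exact .inr ⟨hP, hzA, h⟩
  · rintro (⟨hP, hzA, hzB⟩ | ⟨hP, hzA, hzB⟩)
    · exact ⟨hP, hzA.trans (take_sublist_take_left (Nat.le_succ i)), hzB⟩
    · exact ⟨hP, hzA, hzB.trans (take_sublist_take_left (Nat.le_succ j))⟩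

end Constrained

/-- If `1 ≤ i ≤ |A|`, `1 ≤ j ≤ |B|`, `0 ≤ k ≤ |P|` and
`A[i] ≠ B[j]`, then `C(i,j,k) = max(C(i−1,j,k), C(i,j−1,k))`. -/
theorem stmt5 {α : Type*} (A B P : List α) (i j k : ℕ)
    (hi1 : 1 ≤ i) (hi2 : i ≤ A.length) (hj1 : 1 ≤ j) (hj2 : j ≤ B.length)
    (hAB : A.get ⟨i - 1, by omega⟩ ≠ B.get ⟨j - 1, by omega⟩) :
    Cval A B P i j k = max (Cval A B P (i - 1) j k) (Cval A B P i (j - 1) k) := by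
  obtain ⟨i, rfl⟩ : ∃ i', i = i' + 1 := ⟨i - 1, by omega⟩
  obtain ⟨j, rfl⟩ : ∃ j', j = j' + 1 := ⟨j - 1, by omega⟩
  simp only [Cval_eq_maxLen, Nat.add_sub_cancel]
  rw [constrainedCommonSubseqs_succ_succ A B P hi2 hj2 (by simpa using hAB)]
  exact maxLen_union (fun _ => length_le_of_mem_constrainedCommonSubseqs A B P)
    (fun _ => length_le_of_mem_constrainedCommonSubseqs A B P)
end
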